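/- At any optimal solution of the bilinear reformulation the substituted variables are exact: if β_i < 0 for every i ∈ I and (p*, x*, y*) maximizes g(p,x,y) over the set {(p,x,y) : p ∈ S, x_i ≤ −p_i² for all i ∈ I, and y_{ij} = p_i·p_j for all (i,j) ∈ J}, then x*_i = −(p*_i)² for every i ∈ I. -/

import Mathlib

open scoped BigOperators

theorem eq_of_sum_mul_sub_nonpos {ι R : Type*} [Fintype ι] [Field R] [LinearOrder R]
    [IsStrictOrderedRing R] {c x v : ι → R} (hc : ∀ i, 0 < c i) (hxv : x ≤ v)
    (h : ∑ i, c i * (v i - x i) ≤ 0) : x = v := by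
  have hterm : ∀ i ∈ Finset.univ, 0 ≤ c i * (v i - x i) :=
    fun i _ => mul_nonneg (hc i).le (sub_nonneg.2 (hxv i))
  have hsum : ∑ i, c i * (v i - x i) = 0 := le_antisymm h (Finset.sum_nonneg hterm)
  funext i
  have hi := (Finset.sum_eq_zero_iff_of_nonneg hterm).1 hsum i (Finset.mem_univ i)
  rcases mul_eq_zero.1 hi with hci | hvx
  · exact absurd hci (hc i).ne'
  · exact (sub_eq_zero.1 hvx).symm

theorem optimal_substitution_exact_general
    {I : Type*} [Fintype I]
    (C : I → Finset I) (α β : I → ℝ) (γ : I → I → ℝ)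
    (hβ : ∀ i, β i < 0)
    (S : Set (I → ℝ))
    (g : (I → ℝ) → (I → ℝ) → (I → I → ℝ) → ℝ)
    (hg : ∀ p x y, g p x y = ∑ i, (α i * p i - β i * x i + ∑ j ∈ C i, γ i j * y i j))
    (T : Set ((I → ℝ) × (I → ℝ) × (I → I → ℝ)))
    (hT : T = {t : (I → ℝ) × (I → ℝ) × (I → I → ℝ) |
          t.1 ∈ S ∧ (∀ i, t.2.1 i ≤ -(t.1 i) ^ 2) ∧
          ∀ i, ∀ j ∈ C i, t.2.2 i j = t.1 i * t.1 j})
    (pstar : I → ℝ) (xstar : I → ℝ) (ystar : I → I → ℝ)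
    (hfeas : (pstar, xstar, ystar) ∈ T)
    (hopt : ∀ t ∈ T, g t.1 t.2.1 t.2.2 ≤ g pstar xstar ystar) :
    ∀ i, xstar i = -(pstar i) ^ 2 := by
  subst hT
  obtain ⟨hpS, hx, hy⟩ := hfeas
  set v : I → ℝ := fun i => -(pstar i) ^ 2
  have hle := hopt (pstar, v, ystar) ⟨hpS, fun _ => le_rfl, hy⟩
  have hgap : g pstar v ystar - g pstar xstar ystar = ∑ i, -β i * (v i - xstar i) := by
    rw [hg, hg, ← Finset.sum_sub_distrib]
    exact Finset.sum_congr rfl fun i _ => by ring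
  exact congrFun <| eq_of_sum_mul_sub_nonpos (fun i => neg_pos.2 (hβ i)) hx (by linarith)

/-- At any optimal solution of the bilinear reformulation the substituted variables are exact:
if `β i < 0` for all `i` and `(p*, x*, y*)` maximizes the linearized objective `g` over the
lifted feasible set, then `x* i = -(p* i)^2` for every `i`. -/
theorem optimal_substitution_exact
    {I : Type*} [Fintype I] [Nonempty I] {m : ℕ}
    (C : I → Finset I) (α β : I → ℝ) (γ : I → I → ℝ)
    (A : Matrix (Fin m) I ℝ) (b : Fin m → ℝ) (l u : I → ℝ)
    (hl0 : 0 ≤ l) (hlu : l ≤ u)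
    (hβ : ∀ i, β i < 0)
    (S : Set (I → ℝ))
    (hS : S = {p | A.mulVec p ≤ b ∧ l ≤ p ∧ p ≤ u})
    (g : (I → ℝ) → (I → ℝ) → (I → I → ℝ) → ℝ)
    (hg : ∀ p x y, g p x y = ∑ i, (α i * p i - β i * x i + ∑ j ∈ C i, γ i j * y i j))
    (T : Set ((I → ℝ) × (I → ℝ) × (I → I → ℝ)))
    (hT : T = {t : (I → ℝ) × (I → ℝ) × (I → I → ℝ) |
          t.1 ∈ S ∧ (∀ i, t.2.1 i ≤ -(t.1 i) ^ 2) ∧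
          ∀ i, ∀ j ∈ C i, t.2.2 i j = t.1 i * t.1 j})
    (pstar : I → ℝ) (xstar : I → ℝ) (ystar : I → I → ℝ)
    (hfeas : (pstar, xstar, ystar) ∈ T)
    (hopt : ∀ t ∈ T, g t.1 t.2.1 t.2.2 ≤ g pstar xstar ystar) :
    ∀ i, xstar i = -(pstar i) ^ 2 :=
  optimal_substitution_exact_general C α β γ hβ S g hg T hT pstar xstar ystar hfeas hopt
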